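/- For every 𝒳 ∈ 𝔛̄, the atomic norm satisfies ‖𝒳‖_𝒜 = min{ tr(Z) : Z an N×N symmetric positive semidefinite matrix with P_v(Z) = X_v for all v = 1,…,V }. -/

import Mathlib

open scoped BigOperators
open MeasureTheory ProbabilityTheory Matrix

/-- The conic hull of a set: all finite nonnegative combinations of its elements. -/
def coneHull {E : Type*} [AddCommMonoid E] [Module ℝ E] (s : Set E) : Set E :=
  {x | ∃ (m : ℕ) (l : Fin m → ℝ) (A : Fin m → E),
    (∀ i, 0 ≤ l i) ∧ (∀ i, A i ∈ s) ∧ x = ∑ i, l i • A i}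

/-- Row span of a matrix. -/
def rowSpan {ι κ : Type*} (M : Matrix ι κ ℝ) : Submodule ℝ (κ → ℝ) :=
  Submodule.span ℝ (Set.range M)

/-- Column span of a matrix. -/
def colSpan {ι κ : Type*} (M : Matrix ι κ ℝ) : Submodule ℝ (ι → ℝ) :=
  Submodule.span ℝ (Set.range Mᵀ)

/-- Orthogonality of two subspaces of `κ → ℝ` with respect to the dot product. -/
def PerpSub {κ : Type*} [Fintype κ] (p q : Submodule ℝ (κ → ℝ)) : Prop :=
  ∀ x ∈ p, ∀ y ∈ q, x ⬝ᵥ y = 0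

/-- Spectral norm (largest singular value) of a square real matrix. -/
noncomputable def specNorm {ι : Type*} [Fintype ι] (A : Matrix ι ι ℝ) : ℝ :=
  ⨆ x : {x : ι → ℝ // ∑ i, (x i)^2 = 1}, Real.sqrt (∑ i, (A.mulVec x.1 i)^2)

/-- Largest eigenvalue of a symmetric real matrix (Rayleigh quotient formulation). -/
noncomputable def lambdaMax {ι : Type*} [Fintype ι] (A : Matrix ι ι ℝ) : ℝ :=
  ⨆ x : {x : ι → ℝ // ∑ i, (x i)^2 = 1}, x.1 ⬝ᵥ A.mulVec x.1

/-- A collective-matrix structure: `K` entity types with `n k` instances each,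
`V` views, view `v` relating entity types `r v` (rows) and `c v` (columns),
with at most one view per unordered pair of (distinct) entity types. -/
structure CMStruct where
  K : ℕ
  V : ℕ
  n : Fin K → ℕ
  r : Fin V → Fin K
  c : Fin V → Fin K
  ne : ∀ v, r v ≠ c v
  uniq : ∀ v w : Fin V, (r v = r w ∧ c v = c w) ∨ (r v = c w ∧ c v = r w) → v = w

namespace CMStruct

variable (S : CMStruct)

/-- The index set of size `N = ∑ k, n k`. -/
abbrev Idx := Σ k : Fin S.K, Fin (S.n k)

/-- `N = ∑ k, n k`. -/
abbrev N : ℕ := ∑ k, S.n k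

/-- The space `𝔛` of collective matrices. -/
abbrev Space := ∀ v : Fin S.V, Matrix (Fin (S.n (S.r v))) (Fin (S.n (S.c v))) ℝ

/-- Inner product `⟨𝒳,𝒴⟩ = ∑ v, tr (Xᵥᵀ Yᵥ)`. -/
noncomputable def inner (X Y : S.Space) : ℝ := ∑ v, Matrix.trace ((X v)ᵀ * Y v)

/-- Frobenius norm `‖𝒳‖_F = √⟨𝒳,𝒳⟩`. -/
noncomputable def frobNorm (X : S.Space) : ℝ := Real.sqrt (S.inner X X)

/-- `P_v` extracts the `(r v, c v)` block of an `N × N` matrix. -/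
def Pv (v : Fin S.V) (Z : Matrix S.Idx S.Idx ℝ) :
    Matrix (Fin (S.n (S.r v))) (Fin (S.n (S.c v))) ℝ :=
  Matrix.of fun i j => Z ⟨S.r v, i⟩ ⟨S.c v, j⟩

/-- Place a matrix as the `(k₁,k₂)` block of an `N × N` matrix (zero elsewhere). -/
def place (k₁ k₂ : Fin S.K) (M : Matrix (Fin (S.n k₁)) (Fin (S.n k₂)) ℝ) :
    Matrix S.Idx S.Idx ℝ :=
  Matrix.of fun a b => ∑ i, ∑ j, if a = ⟨k₁, i⟩ ∧ b = ⟨k₂, j⟩ then M i j else 0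

/-- Symmetric block representation `B(𝒳)`. -/
def B (X : S.Space) : Matrix S.Idx S.Idx ℝ :=
  ∑ v, (S.place (S.r v) (S.c v) (X v) + S.place (S.c v) (S.r v) (X v)ᵀ)

/-- Generators of the atom set: `[P_v(u uᵀ)]_v` for unit vectors `u`. -/
def atomGen : Set S.Space :=
  {A | ∃ u : S.Idx → ℝ, (∑ a, (u a)^2 = 1) ∧ A = fun v => S.Pv v (Matrix.vecMulVec u u)}

/-- The atom set `𝒜 = ext (conv {[P_v(u uᵀ)]_v : ‖u‖₂ = 1})`. -/
def atoms : Set S.Space := Set.extremePoints ℝ (convexHull ℝ S.atomGen)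

/-- `𝒳` admits a joint factorization of some finite dimension. -/
def HasJF (X : S.Space) : Prop :=
  ∃ (R : ℕ) (U : ∀ k : Fin S.K, Matrix (Fin (S.n k)) (Fin R) ℝ),
    ∀ v, X v = U (S.r v) * (U (S.c v))ᵀ

/-- `𝔛̄`: collective matrices admitting a joint factorization. -/
def Xbar : Set S.Space := {X | S.HasJF X}

/-- Collective-matrix rank: minimal dimension of a joint factorization. -/
noncomputable def cmRank (X : S.Space) : ℕ :=
  sInf {R | ∃ U : ∀ k : Fin S.K, Matrix (Fin (S.n k)) (Fin R) ℝ,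
    ∀ v, X v = U (S.r v) * (U (S.c v))ᵀ}

/-- The atomic norm: the gauge of `conv 𝒜`. -/
noncomputable def atomicNorm (X : S.Space) : ℝ := gauge (convexHull ℝ S.atoms) X

/-- The support function `‖𝒳‖_𝒜^* = sup {⟨𝒳,𝒜'⟩ : 𝒜' ∈ 𝒜}`. -/
noncomputable def dualNorm (X : S.Space) : ℝ := sSup {t | ∃ A ∈ S.atoms, t = S.inner X A}

/-- The set of "sign" collective matrices `ℰ(ℳ)`. -/
def signSet (M : S.Space) : Set S.Space :=
  {E | S.atomicNorm M = S.inner E M ∧ S.dualNorm E = 1}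

/-- The entity-relationship graph is bipartite (2-colorable). -/
def Bipartite : Prop := ∃ f : Fin S.K → Bool, ∀ v, f (S.r v) ≠ f (S.c v)

/-- The entity-relationship graph `𝒢`. -/
def graph : SimpleGraph (Fin S.K) :=
  SimpleGraph.fromEdgeSet {e | ∃ v, e = s(S.r v, S.c v)}

/-- The standard basis collective matrix `E^{(v,i,j)}`. -/
def stdBasis (v : Fin S.V) (i : Fin (S.n (S.r v))) (j : Fin (S.n (S.c v))) : S.Space :=
  fun w =>
    if h : v = w then
      Matrix.single (Fin.cast (congrArg (fun x => S.n (S.r x)) h) i)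
        (Fin.cast (congrArg (fun x => S.n (S.c x)) h) j) (1 : ℝ)
    else 0

/-- Index type of view entries `(v, i, j)`. -/
abbrev IdxE := Σ v : Fin S.V, Fin (S.n (S.r v)) × Fin (S.n (S.c v))

/-- Standard basis indexed by a view-entry index. -/
def stdE (e : S.IdxE) : S.Space := S.stdBasis e.1 e.2.1 e.2.2

/-- `‖𝒳‖_max = max_{(v,i,j)} |⟨𝒳, E^{(v,i,j)}⟩|`. -/
noncomputable def maxNorm (X : S.Space) : ℝ := ⨆ e : S.IdxE, |S.inner X (S.stdE e)|

/-- Column index type of the entity matrix `𝕏ₖ` (of cardinality `m k`). -/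
def EIdx (k : Fin S.K) : Type :=
  (Σ v : {v : Fin S.V // S.r v = k}, Fin (S.n (S.c v.1))) ⊕
  (Σ v : {v : Fin S.V // S.c v = k}, Fin (S.n (S.r v.1)))

instance (k : Fin S.K) : Fintype (S.EIdx k) := by unfold EIdx; infer_instance

/-- The entity matrix `𝕏ₖ`: horizontal concatenation of the `X v` with `r v = k` and
the `(X v)ᵀ` with `c v = k`. -/
def entityMat (X : S.Space) (k : Fin S.K) : Matrix (Fin (S.n k)) (S.EIdx k) ℝ :=
  Matrix.of fun i e =>
    match e with
    | Sum.inl ⟨v, j⟩ => X v.1 (Fin.cast (congrArg S.n v.2.symm) i) j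
    | Sum.inr ⟨v, j⟩ => X v.1 j (Fin.cast (congrArg S.n v.2.symm) i)

/-- `m k = ∑ v, (n_{c v}·1[r v = k] + n_{r v}·1[c v = k])`, the column dimension of `𝕏ₖ`. -/
def mcol (k : Fin S.K) : ℕ :=
  ∑ v, ((if S.r v = k then S.n (S.c v) else 0) + (if S.c v = k then S.n (S.r v) else 0))

/-- The generating set of the model subspace `T` (for ground truth `M`). -/
def Tset (M : S.Space) : Set S.Space :=
  {Y | S.HasJF Y ∧ ∀ v,
    rowSpan (S.entityMat Y (S.r v)) ≤ rowSpan (S.entityMat M (S.r v)) ∨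
    rowSpan (S.entityMat Y (S.c v)) ≤ rowSpan (S.entityMat M (S.c v))}

/-- The model subspace `T` (the affine hull of `Tset`, which contains `0`,
hence equals the linear span). -/
def Tsub (M : S.Space) : Submodule ℝ S.Space := Submodule.span ℝ (S.Tset M)

/-- `T^⊥`. -/
def Tperp (M : S.Space) : Set S.Space :=
  {Y | S.HasJF Y ∧ ∀ v,
    PerpSub (rowSpan (Y v)) (rowSpan (M v)) ∧ PerpSub (colSpan (Y v)) (colSpan (M v))}

/-- `T^⊥` as a submodule. -/
def TperpSub (M : S.Space) : Submodule ℝ S.Space := Submodule.span ℝ (S.Tperp M)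

/-- `P` is the orthogonal projection onto the subspace `T` of `𝔛`. -/
def IsOrthProj (T : Submodule ℝ S.Space) (P : S.Space → S.Space) : Prop :=
  (∀ X, P X ∈ T) ∧ (∀ X, ∀ Y ∈ T, S.inner (X - P X) Y = 0)

/-- Sampling probabilities `p(v,i,j)·|Ω|⁻¹` where
`p(v,i,j) = |Ω_{r v}|/(2 n_{r v} m_{r v}) + |Ω_{c v}|/(2 n_{c v} m_{c v})`. -/
noncomputable def pweight (w : Fin S.K → ℝ) (e : S.IdxE) : ℝ :=
  w (S.r e.1) / (2 * (S.n (S.r e.1) : ℝ) * (S.mcol (S.r e.1) : ℝ)) +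
  w (S.c e.1) / (2 * (S.n (S.c e.1) : ℝ) * (S.mcol (S.c e.1) : ℝ))

/-- The operator `R_Ω`. -/
noncomputable def Romega (w : Fin S.K → ℝ) {m : ℕ} (Ω : Fin m → S.IdxE) (X : S.Space) :
    S.Space :=
  ∑ s, (S.inner X (S.stdE (Ω s)) / S.pweight w (Ω s)) • S.stdE (Ω s)

/-- The sampling operator `P_Ω`. -/
noncomputable def Pomega {m : ℕ} (Ω : Fin m → S.IdxE) (X : S.Space) : S.Space :=
  ∑ s, S.inner X (S.stdE (Ω s)) • S.stdE (Ω s)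

/-- `κ_Ω(N) = 3|Ω| √(max_k |Ω_k|/(n_k m_k)) / (min_k |Ω_k|/(n_k m_k))`. -/
noncomputable def kappa (w : Fin S.K → ℝ) (m : ℕ) : ℝ :=
  3 * m * Real.sqrt (⨆ k, w k / ((S.n k : ℝ) * (S.mcol k : ℝ))) /
    (⨅ k, w k / ((S.n k : ℝ) * (S.mcol k : ℝ)))

instance : MeasurableSpace S.IdxE := ⊤

end CMStruct

/-!
Write `𝒫 Z = (P_v Z)_v`. Since every PSD matrix is a nonnegative combination of rank-one
matrices `u uᵀ`, the hull `conv {u uᵀ : ‖u‖ = 1}` is the spectraplex `{Z ⪰ 0, tr Z = 1}`, so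
`𝒳 ∈ t • conv 𝒜₀` (with `𝒜₀ = 𝒫 {u uᵀ : ‖u‖ = 1}`) iff `𝒳 = 𝒫 Z` for a PSD `Z` of trace `t`.
The set `conv 𝒜₀` is compact, hence by Krein–Milman it is the closure of `conv 𝒜`. It contains
the `ℓ¹`-ball spanned by the two-point atoms `±E^{(v,i,j)}/2`, so it is a neighbourhood of `0`,
and then so is `conv 𝒜`, a convex set with the same closure in finite dimension. For a convex
neighbourhood `C` of `0`, `gauge C 𝒳 ≤ t ↔ 𝒳 ∈ t • closure C`; the minimum is attained because
`closure (conv 𝒜) = conv 𝒜₀` is closed.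
-/

open Set Module Topology Matrix
open scoped Pointwise

instance Matrix.locallyConvexSpace {m n : Type*} : LocallyConvexSpace ℝ (Matrix m n ℝ) :=
  inferInstanceAs (LocallyConvexSpace ℝ (m → n → ℝ))

theorem isCompact_convexHull {E : Type*} [AddCommGroup E] [Module ℝ E] [TopologicalSpace E]
    [ContinuousAdd E] [ContinuousSMul ℝ E] [FiniteDimensional ℝ E] {s : Set E}
    (hs : IsCompact s) : IsCompact (convexHull ℝ s) := by
  let combo (k : ℕ) (p : (Fin k → ℝ) × (Fin k → E)) : E := ∑ i, p.1 i • p.2 i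
  let combos (k : ℕ) := combo k '' (stdSimplex ℝ (Fin k) ×ˢ univ.pi fun _ => s)
  have hcombos : convexHull ℝ s = ⋃ k ∈ Iic (finrank ℝ E + 1), combos k := by
    refine Subset.antisymm (fun x hx => ?_) (iUnion₂_subset fun k _ => ?_)
    · obtain ⟨ι, _, z, w, hzs, hind, hw₀, hw₁, rfl⟩ := eq_pos_convex_span_of_mem_convexHull hx
      let e := Fintype.equivFin ι
      refine mem_biUnion (x := Fintype.card ι)
        (hind.card_le_finrank_succ.trans (Nat.succ_le_succ (Submodule.finrank_le _))) ?_
      refine ⟨(w ∘ e.symm, z ∘ e.symm), ⟨⟨fun i => (hw₀ _).le, ?_⟩, fun i _ => hzs ⟨_, rfl⟩⟩, ?_⟩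
      · simpa [e.symm.sum_comp] using hw₁
      · exact e.symm.sum_comp fun i => w i • z i
    · rintro _ ⟨p, ⟨hw, hz⟩, rfl⟩
      exact (convex_convexHull ℝ s).sum_mem (fun i _ => hw.1 i) hw.2
        fun i _ => subset_convexHull ℝ s (hz i (mem_univ i))
  rw [hcombos]
  exact (finite_Iic _).isCompact_biUnion fun k _ =>
    ((isCompact_stdSimplex ℝ (Fin k)).prod (isCompact_univ_pi fun _ => hs)).image (by fun_prop)

theorem Convex.interior_closure_eq_interior {V : Type*} [NormedAddCommGroup V] [NormedSpace ℝ V]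
    [FiniteDimensional ℝ V] {s : Set V} (hs : Convex ℝ s) : interior (closure s) = interior s := by
  rcases (interior s).eq_empty_or_nonempty with h | h
  · have hspan : affineSpan ℝ (closure s) ≤ affineSpan ℝ s := affineSpan_le.2 <|
      closure_minimal (subset_affineSpan ℝ s) (AffineSubspace.closed_of_finiteDimensional _)
    rw [h, ← not_nonempty_iff_eq_empty, hs.closure.interior_nonempty_iff_affineSpan_eq_top]
    rw [← not_nonempty_iff_eq_empty, hs.interior_nonempty_iff_affineSpan_eq_top] at h
    exact fun htop => h (top_unique (htop ▸ hspan))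
  · exact hs.interior_closure_eq_interior_of_nonempty_interior h

theorem gauge_le_iff_mem_smul_closure {E : Type*} [AddCommGroup E] [Module ℝ E]
    [TopologicalSpace E] [IsTopologicalAddGroup E] [ContinuousSMul ℝ E] {s : Set E}
    (hc : Convex ℝ s) (hs₀ : s ∈ 𝓝 0) {t : ℝ} (ht : 0 < t) (x : E) :
    gauge s x ≤ t ↔ x ∈ t • closure s := by
  rw [mem_smul_set_iff_inv_smul_mem₀ ht.ne', ← gauge_le_one_iff_mem_closure hc hs₀,
    gauge_smul_of_nonneg (inv_nonneg.2 ht.le), smul_eq_mul, inv_mul_le_iff₀ ht, mul_one]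

theorem Convex.sum_smul_mem_of_sum_le_one {E ι : Type*} [AddCommGroup E] [Module ℝ E] {s : Set E}
    (hs : Convex ℝ s) (h₀ : (0 : E) ∈ s) {t : Finset ι} {w : ι → ℝ} {z : ι → E}
    (hw : ∀ i ∈ t, 0 ≤ w i) (hw₁ : ∑ i ∈ t, w i ≤ 1) (hz : ∀ i ∈ t, z i ∈ s) :
    ∑ i ∈ t, w i • z i ∈ s := by
  rcases (Finset.sum_nonneg hw).eq_or_lt with h | h
  · rw [Finset.sum_eq_zero fun i hi => by
      rw [(Finset.sum_eq_zero_iff_of_nonneg hw).1 h.symm i hi, zero_smul]]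
    exact h₀
  · have := hs.smul_mem_of_zero_mem h₀ (hs.centerMass_mem hw h hz) ⟨h.le, hw₁⟩
    rwa [Finset.centerMass, smul_smul, mul_inv_cancel₀ h.ne', one_smul] at this

section Spectraplex

variable {n : Type*} [Fintype n]

lemma trace_vecMulVec_self (u : n → ℝ) : (vecMulVec u u).trace = ∑ a, u a ^ 2 := by
  simp [trace, vecMulVec_apply, sq]

theorem convexHull_vecMulVec_self_eq :
    convexHull ℝ {Z : Matrix n n ℝ | ∃ u : n → ℝ, ∑ a, u a ^ 2 = 1 ∧ vecMulVec u u = Z} =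
      {Z | Z.PosSemidef ∧ Z.trace = 1} := by
  refine Subset.antisymm (convexHull_min ?_ ?_) ?_
  · rintro _ ⟨u, hu, rfl⟩
    exact ⟨by simpa using posSemidef_vecMulVec_self_star u, (trace_vecMulVec_self u).trans hu⟩
  · rintro Z ⟨hZ, hZ₁⟩ W ⟨hW, hW₁⟩ a b ha hb hab
    exact ⟨(hZ.smul ha).add (hW.smul hb), by simp [hZ₁, hW₁, hab]⟩
  · rintro Z ⟨hZ, hZ₁⟩
    obtain ⟨m, v, rfl⟩ := posSemidef_iff_eq_sum_vecMulVec.1 hZ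
    simp only [star_trivial] at hZ₁ ⊢
    let w i := ∑ a, v i a ^ 2
    have hw₀ i : 0 ≤ w i := Finset.sum_nonneg fun a _ => sq_nonneg _
    have hw₁ : ∑ i, w i = 1 := by
      rwa [trace_sum, Finset.sum_congr rfl fun i _ => trace_vecMulVec_self (v i)] at hZ₁
    let û i := (√(w i))⁻¹ • v i
    have hû i (hi : w i ≠ 0) : ∑ a, û i a ^ 2 = 1 := by
      simp only [û, Pi.smul_apply, smul_eq_mul, mul_pow, ← Finset.mul_sum, inv_pow,
        Real.sq_sqrt (hw₀ i)]
      exact inv_mul_cancel₀ hi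
    have hv i (hi : w i ≠ 0) : vecMulVec (v i) (v i) = w i • vecMulVec (û i) (û i) := by
      ext a b
      simp only [û, vecMulVec_apply, Matrix.smul_apply, Pi.smul_apply, smul_eq_mul]
      rw [show w i * ((√(w i))⁻¹ * v i a * ((√(w i))⁻¹ * v i b)) =
          w i * ((√(w i))⁻¹) ^ 2 * (v i a * v i b) by ring,
        inv_pow, Real.sq_sqrt (hw₀ i), mul_inv_cancel₀ hi, one_mul]
    have hsum : ∑ i, vecMulVec (v i) (v i) =
        ∑ i ∈ {i | w i ≠ 0}, w i • vecMulVec (û i) (û i) := by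
      rw [← Finset.sum_filter_of_ne (p := fun i => w i ≠ 0)]
      · exact Finset.sum_congr rfl fun i hi => hv i (Finset.mem_filter.1 hi).2
      · intro i _ hvi hi
        have : v i = 0 := funext fun a => pow_eq_zero_iff two_ne_zero |>.1 <|
          (Finset.sum_eq_zero_iff_of_nonneg fun a _ => sq_nonneg (v i a)).1 hi a (Finset.mem_univ a)
        exact hvi (by simp [this])
    rw [← Finset.sum_filter_ne_zero] at hw₁
    rw [hsum]
    exact (convex_convexHull ℝ _).sum_mem (fun i _ => hw₀ i) hw₁ fun i hi =>
      subset_convexHull ℝ _ ⟨û i, hû i (Finset.mem_filter.1 hi).2, rfl⟩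

lemma smul_setOf_posSemidef_trace_eq_one {t : ℝ} (ht : 0 < t) :
    t • {Z : Matrix n n ℝ | Z.PosSemidef ∧ Z.trace = 1} = {Z | Z.PosSemidef ∧ Z.trace = t} := by
  ext Z
  rw [mem_smul_set_iff_inv_smul_mem₀ ht.ne']
  refine ⟨fun ⟨hZ, hZ₁⟩ => ⟨?_, ?_⟩, fun ⟨hZ, hZt⟩ => ⟨hZ.smul (inv_nonneg.2 ht.le), ?_⟩⟩
  · simpa [smul_smul, mul_inv_cancel₀ ht.ne'] using hZ.smul ht.le
  · rw [trace_smul, smul_eq_mul, inv_mul_eq_one₀ ht.ne'] at hZ₁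
    exact hZ₁.symm
  · rw [trace_smul, hZt, smul_eq_mul, inv_mul_cancel₀ ht.ne']

end Spectraplex

namespace CMStruct

variable (S : CMStruct)

def blockProj : Matrix S.Idx S.Idx ℝ →ₗ[ℝ] S.Space where
  toFun Z v := S.Pv v Z
  map_add' _ _ := rfl
  map_smul' _ _ := rfl

lemma atomGen_eq_image :
    S.atomGen = S.blockProj '' {Z | ∃ u : S.Idx → ℝ, ∑ a, u a ^ 2 = 1 ∧ vecMulVec u u = Z} := by
  ext A
  constructor
  · rintro ⟨u, hu, rfl⟩
    exact ⟨_, ⟨u, hu, rfl⟩, rfl⟩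
  · rintro ⟨_, ⟨u, hu, rfl⟩, rfl⟩
    exact ⟨u, hu, rfl⟩

theorem mem_smul_convexHull_atomGen_iff {t : ℝ} (ht : 0 < t) (X : S.Space) :
    X ∈ t • convexHull ℝ S.atomGen ↔
      ∃ Z : Matrix S.Idx S.Idx ℝ, Z.PosSemidef ∧ (∀ v, S.Pv v Z = X v) ∧ Z.trace = t := by
  rw [atomGen_eq_image, ← LinearMap.image_convexHull, convexHull_vecMulVec_self_eq,
    ← image_smul_set, smul_setOf_posSemidef_trace_eq_one ht]
  simp only [mem_image, mem_ofPred_eq, funext_iff]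
  exact ⟨fun ⟨Z, ⟨hZ, htr⟩, hX⟩ => ⟨Z, hZ, hX, htr⟩, fun ⟨Z, hZ, hX, htr⟩ => ⟨Z, ⟨hZ, htr⟩, hX⟩⟩

lemma isCompact_atomGen : IsCompact S.atomGen := by
  have hsphere : IsCompact {u : S.Idx → ℝ | ∑ a, u a ^ 2 = 1} := by
    refine (isCompact_univ_pi fun _ => isCompact_Icc (a := -1) (b := 1)).of_isClosed_subset
      (isClosed_eq (by fun_prop) continuous_const) fun u hu a _ => abs_le.1 ?_
    exact (sq_le_one_iff_abs_le_one _).1 <|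
      hu ▸ Finset.single_le_sum (fun b _ => sq_nonneg (u b)) (Finset.mem_univ a)
  have : S.atomGen = (fun u => S.blockProj (vecMulVec u u)) '' {u | ∑ a, u a ^ 2 = 1} := by
    ext A
    exact ⟨fun ⟨u, hu, hA⟩ => ⟨u, hu, hA.symm⟩, fun ⟨u, hu, hA⟩ => ⟨u, hu, hA.symm⟩⟩
  rw [this]
  exact hsphere.image (by fun_prop)

lemma closure_convexHull_atoms : closure (convexHull ℝ S.atoms) = convexHull ℝ S.atomGen :=
  closure_convexHull_extremePoints (isCompact_convexHull S.isCompact_atomGen)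
    (convex_convexHull ℝ _)

def pairVec (e : S.IdxE) (x y : ℝ) : S.Idx → ℝ :=
  Pi.single ⟨S.r e.1, e.2.1⟩ x + Pi.single ⟨S.c e.1, e.2.2⟩ y

lemma sum_sq_pairVec (e : S.IdxE) (x y : ℝ) : ∑ a, S.pairVec e x y a ^ 2 = x ^ 2 + y ^ 2 := by
  have hne : (⟨S.r e.1, e.2.1⟩ : S.Idx) ≠ ⟨S.c e.1, e.2.2⟩ := fun h => S.ne e.1 (congrArg Sigma.fst h)
  rw [Fintype.sum_eq_add _ _ hne]
  · simp [pairVec, hne, hne.symm]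
  · rintro d ⟨h₁, h₂⟩
    simp [pairVec, h₁, h₂]

lemma blockProj_vecMulVec_pairVec (e : S.IdxE) (x y : ℝ) (w : Fin S.V) (p : Fin (S.n (S.r w)))
    (q : Fin (S.n (S.c w))) :
    S.blockProj (vecMulVec (S.pairVec e x y) (S.pairVec e x y)) w p q =
      if (⟨w, (p, q)⟩ : S.IdxE) = e then x * y else 0 := by
  obtain ⟨v, i, j⟩ := e
  simp only [blockProj, Pv, pairVec, LinearMap.coe_mk, AddHom.coe_mk, of_apply, vecMulVec_apply,
    Pi.add_apply, Pi.single_apply]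
  have hrc := S.ne w
  by_cases hw : w = v
  · subst hw
    split_ifs <;> simp_all
  · have huniq := fun h => hw (S.uniq w v h)
    split_ifs <;> simp_all

lemma exists_mem_atomGen_apply_eq (e : S.IdxE) {σ : ℝ} (hσ : σ ^ 2 = 1) :
    ∃ A ∈ S.atomGen, ∀ w p q, A w p q = if (⟨w, (p, q)⟩ : S.IdxE) = e then σ / 2 else 0 := by
  have h2 : √2 ^ 2 = 2 := Real.sq_sqrt zero_le_two
  refine ⟨S.blockProj (vecMulVec (S.pairVec e (σ / √2) (1 / √2)) (S.pairVec e (σ / √2) (1 / √2))),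
    ⟨_, by rw [S.sum_sq_pairVec, div_pow, div_pow, h2, hσ]; norm_num, rfl⟩, fun w p q => ?_⟩
  rw [S.blockProj_vecMulVec_pairVec]
  congr 1
  field_simp
  rw [h2]

lemma zero_mem_convexHull_atomGen [Nonempty S.IdxE] : (0 : S.Space) ∈ convexHull ℝ S.atomGen := by
  obtain ⟨e⟩ := ‹Nonempty S.IdxE›
  obtain ⟨A, hA, hAe⟩ := S.exists_mem_atomGen_apply_eq e (σ := 1) (by norm_num)
  obtain ⟨B, hB, hBe⟩ := S.exists_mem_atomGen_apply_eq e (σ := -1) (by norm_num)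
  have hmid : (1 / 2 : ℝ) • A + (1 / 2 : ℝ) • B = 0 := by
    funext w
    ext p q
    simp only [Pi.add_apply, Pi.smul_apply, Matrix.add_apply, Matrix.smul_apply, hAe, hBe]
    split_ifs <;> norm_num
  rw [← hmid]
  exact convex_convexHull ℝ _ (subset_convexHull ℝ _ hA) (subset_convexHull ℝ _ hB)
    (by norm_num) (by norm_num) (by norm_num)

lemma mem_convexHull_atomGen_of_sum_abs_le [Nonempty S.IdxE] {Y : S.Space}
    (hY : ∑ e : S.IdxE, |Y e.1 e.2.1 e.2.2| ≤ 1 / 2) : Y ∈ convexHull ℝ S.atomGen := by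
  have hsign (a : ℝ) : ∃ σ : ℝ, σ ^ 2 = 1 ∧ |a| * σ = a := by
    rcases le_or_gt 0 a with ha | ha
    · exact ⟨1, by norm_num, by rw [abs_of_nonneg ha, mul_one]⟩
    · exact ⟨-1, by norm_num, by rw [abs_of_neg ha]; ring⟩
  choose σ hσ hσY using fun e : S.IdxE => hsign (Y e.1 e.2.1 e.2.2)
  choose A hA hAe using fun e => S.exists_mem_atomGen_apply_eq e (hσ e)
  have hYA : Y = ∑ e, (2 * |Y e.1 e.2.1 e.2.2|) • A e := by
    funext w
    ext p q
    simp only [Finset.sum_apply, Matrix.sum_apply, Pi.smul_apply, Matrix.smul_apply, hAe,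
      smul_eq_mul, mul_ite, mul_zero, Finset.sum_ite_eq, Finset.mem_univ, if_true]
    linarith [hσY ⟨w, (p, q)⟩]
  rw [hYA]
  exact (convex_convexHull ℝ _).sum_smul_mem_of_sum_le_one S.zero_mem_convexHull_atomGen
    (fun e _ => by positivity) (by rw [← Finset.mul_sum]; linarith)
    fun e _ => subset_convexHull ℝ _ (hA e)

lemma convexHull_atomGen_mem_nhds_zero [Nonempty S.IdxE] : convexHull ℝ S.atomGen ∈ 𝓝 0 := by
  refine Filter.mem_of_superset ?_ fun Y (hY : ∑ e : S.IdxE, |Y e.1 e.2.1 e.2.2| < 1 / 2) =>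
    S.mem_convexHull_atomGen_of_sum_abs_le hY.le
  have hcont : Continuous fun Y : S.Space => ∑ e : S.IdxE, |Y e.1 e.2.1 e.2.2| := by fun_prop
  exact (isOpen_lt hcont continuous_const).mem_nhds (by simp)

lemma convexHull_atoms_mem_nhds_zero [Nonempty S.IdxE] : convexHull ℝ S.atoms ∈ 𝓝 0 := by
  have hint : interior (closure (convexHull ℝ S.atoms)) = interior (convexHull ℝ S.atoms) := by
    -- The sup norm on matrices induces their product topology.
    let _ : ∀ v : Fin S.V, NormedAddCommGroup (Matrix (Fin (S.n (S.r v))) (Fin (S.n (S.c v))) ℝ) :=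
      fun _ => Matrix.normedAddCommGroup
    let _ : ∀ v : Fin S.V, NormedSpace ℝ (Matrix (Fin (S.n (S.r v))) (Fin (S.n (S.c v))) ℝ) :=
      fun _ => Matrix.normedSpace
    exact (convex_convexHull ℝ _).interior_closure_eq_interior
  rw [← mem_interior_iff_mem_nhds, ← hint, closure_convexHull_atoms, mem_interior_iff_mem_nhds]
  exact S.convexHull_atomGen_mem_nhds_zero

lemma isVonNBounded_convexHull_atoms : Bornology.IsVonNBounded ℝ (convexHull ℝ S.atoms) :=
  (isCompact_convexHull S.isCompact_atomGen).isVonNBounded (𝕜 := ℝ) |>.subset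
    (S.closure_convexHull_atoms ▸ subset_closure)

end CMStruct


theorem atomicNorm_eq_min_trace_psd_general (S : CMStruct) (X : S.Space) :
    IsLeast {t : ℝ | ∃ Z : Matrix S.Idx S.Idx ℝ,
        Z.PosSemidef ∧ (∀ v, S.Pv v Z = X v) ∧ t = Z.trace}
      (S.atomicNorm X) := by
  rcases eq_or_ne X 0 with rfl | hX
  · refine ⟨⟨0, PosSemidef.zero, fun v => rfl, by simp [CMStruct.atomicNorm]⟩, ?_⟩
    rintro _ ⟨Z, hZ, -, rfl⟩
    simpa [CMStruct.atomicNorm] using hZ.trace_nonneg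
  have : Nonempty S.IdxE := by
    by_contra h
    exact hX (funext fun v => Matrix.ext fun i j => (not_nonempty_iff.1 h).elim ⟨v, i, j⟩)
  have hnhds := S.convexHull_atoms_mem_nhds_zero
  have key (t : ℝ) (ht : 0 < t) : S.atomicNorm X ≤ t ↔
      ∃ Z : Matrix S.Idx S.Idx ℝ, Z.PosSemidef ∧ (∀ v, S.Pv v Z = X v) ∧ Z.trace = t := by
    rw [CMStruct.atomicNorm, gauge_le_iff_mem_smul_closure (convex_convexHull ℝ _) hnhds ht,
      S.closure_convexHull_atoms, S.mem_smul_convexHull_atomGen_iff ht]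
  have hpos : 0 < S.atomicNorm X :=
    (gauge_pos (absorbent_nhds_zero hnhds) S.isVonNBounded_convexHull_atoms).2 hX
  refine ⟨?_, ?_⟩
  · obtain ⟨Z, hZ, hZX, htr⟩ := (key _ hpos).1 le_rfl
    exact ⟨Z, hZ, hZX, htr.symm⟩
  · rintro _ ⟨Z, hZ, hZX, rfl⟩
    have htr : 0 < Z.trace := hZ.trace_nonneg.lt_of_ne fun h => hX <| funext fun v => by
      rw [← hZX v, hZ.trace_eq_zero_iff.1 h.symm]
      rfl
    exact (key _ htr).2 ⟨Z, hZ, hZX, rfl⟩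

/-- For `𝒳 ∈ 𝔛̄`, the atomic norm equals the minimum of `tr Z` over
PSD matrices `Z` with `P_v Z = X_v` for all `v` (and this minimum is attained). -/
theorem atomicNorm_eq_min_trace_psd (S : CMStruct) (X : S.Space) (hX : X ∈ S.Xbar) :
    IsLeast {t : ℝ | ∃ Z : Matrix S.Idx S.Idx ℝ,
        Z.PosSemidef ∧ (∀ v, S.Pv v Z = X v) ∧ t = Z.trace}
      (S.atomicNorm X) :=
  atomicNorm_eq_min_trace_psd_general S X
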